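/- Let m ≥ 1. The map h defined by h(u) = η(α u⁻¹ β⁻¹) restricts to a bijection from the segment [id, w_{2m}] onto C_{2m+2}; in particular the cardinality of the segment [id, w_{2m}] in S_{2m} equals the cardinality of C_{2m+2}. -/

import Mathlib

/-- Membership in `S_n`, realized as permutations of `ℕ` fixing every point
outside `{1, …, n}`. -/
def InSymm (n : ℕ) (π : Equiv.Perm ℕ) : Prop :=
  ∀ i : ℕ, i ∉ Finset.Icc 1 n → π i = i

/-- The ℓ¹-distance `D(u,v) = ∑_{i=1}^n |u(i) − v(i)|` on `S_n`. -/
def permDist (n : ℕ) (u v : Equiv.Perm ℕ) : ℤ :=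
  ∑ i ∈ Finset.Icc 1 n, |(u i : ℤ) - (v i : ℤ)|

/-!
The ℓ¹ distance is additive along `id, u, w` exactly when it is additive in every coordinate, so
`u ∈ [id, w_{2m}]` iff each `u(t)` lies between `t` and `w_{2m}(t)`, that is
`⌈α(t)/2⌉ ≤ u(t) ≤ ⌈α(t)/2⌉ + m`. Substituting `t = u⁻¹(j)` and `α u⁻¹ = g β` with
`g = α u⁻¹ β⁻¹`, the values of `β` turn this into: `g` has an excedance at each `2k` and a
deficiency at each `2k+1` for `1 ≤ k < m`. As `η` shifts positions and values by one, this is the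
condition `π(2i) < 2i ≤ π(2i−1)` of `C_{2m+2}` for `π = η(g)` at `2 ≤ i ≤ m`; at `i = 1` and
`i = m+1` it holds for every `η(g)`, and conversely it forces `π(2) = 1` and `π(2m+1) = 2m+2`,
which is what makes every `π ∈ C_{2m+2}` of the form `η(g)`.
-/

open Equiv Finset

namespace InSymm

variable {n : ℕ} {π ρ : Perm ℕ}

lemma inv (h : InSymm n π) : InSymm n π⁻¹ := fun i hi => by
  rw [Perm.inv_eq_iff_eq, h i hi]

lemma mul (hπ : InSymm n π) (hρ : InSymm n ρ) : InSymm n (π * ρ) := fun i hi => by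
  rw [Perm.mul_apply, hρ i hi, hπ i hi]

lemma apply_mem_Icc (h : InSymm n π) {i : ℕ} (hi : i ∈ Icc 1 n) : π i ∈ Icc 1 n := by
  by_contra hπi
  have hfix : π⁻¹ (π i) = π i := h.inv _ hπi
  rw [Perm.inv_eq_iff_eq, π.injective.eq_iff] at hfix
  exact hπi (hfix ▸ hi)

lemma apply_bounds (h : InSymm n π) {i : ℕ} (h1 : 1 ≤ i) (h2 : i ≤ n) : 1 ≤ π i ∧ π i ≤ n :=
  mem_Icc.1 (h.apply_mem_Icc (mem_Icc.2 ⟨h1, h2⟩))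

lemma forall_mem_Icc_iff (h : InSymm n π) {P : ℕ → ℕ → Prop} :
    (∀ i ∈ Icc 1 n, P i (π i)) ↔ ∀ j ∈ Icc 1 n, P (π⁻¹ j) j := by
  refine ⟨fun hP j hj => ?_, fun hP i hi => ?_⟩
  · simpa using hP _ (h.inv.apply_mem_Icc hj)
  · simpa using hP _ (h.apply_mem_Icc hi)

end InSymm

lemma permDist_add_permDist_eq_iff (n : ℕ) (u v w : Perm ℕ) :
    permDist n u v + permDist n v w = permDist n u w ↔
      ∀ i ∈ Icc 1 n, u i ≤ v i ∧ v i ≤ w i ∨ w i ≤ v i ∧ v i ≤ u i := by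
  unfold permDist
  rw [← sum_add_distrib, eq_comm, sum_eq_sum_iff_of_le fun i _ => abs_sub_le _ ((v i : ℤ)) _]
  refine forall₂_congr fun i _ => ?_
  rw [← sub_add_sub_cancel (u i : ℤ) (v i) (w i), abs_add_eq_add_abs_iff]
  omega

def AltExcedance (m : ℕ) (g : Perm ℕ) : Prop :=
  ∀ k, 1 ≤ k → k < m → g (2 * k + 1) < 2 * k + 1 ∧ 2 * k + 1 ≤ g (2 * k)

-- The bounds say `⌈α(t)/2⌉ ≤ v(t) ≤ ⌈α(t)/2⌉ + m`, written without division.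
lemma segment_iff_forall_alpha_le {m : ℕ} {w α : Perm ℕ} (v : Perm ℕ)
    (hw1 : ∀ j, 1 ≤ j → j ≤ m → w j = j + m)
    (hw2 : ∀ j, m + 1 ≤ j → j ≤ 2 * m → w j = j - m)
    (hα1 : ∀ j, 1 ≤ j → j ≤ m → α j = 2 * j - 1)
    (hα2 : ∀ j, m + 1 ≤ j → j ≤ 2 * m → α j = 2 * j - 2 * m) :
    permDist (2 * m) 1 v + permDist (2 * m) v w = permDist (2 * m) 1 w ↔
      ∀ t ∈ Icc 1 (2 * m), α t ≤ 2 * v t ∧ 2 * v t ≤ α t + 2 * m + 1 := by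
  rw [permDist_add_permDist_eq_iff]
  refine forall₂_congr fun t ht => ?_
  rw [mem_Icc] at ht
  rw [Perm.one_apply]
  rcases le_or_gt t m with ht' | ht'
  · rw [hw1 t ht.1 ht', hα1 t ht.1 ht']
    omega
  · rw [hw2 t ht' ht.2, hα2 t ht' ht.2]
    omega

lemma forall_beta_le_iff_altExcedance {m : ℕ} {g β : Perm ℕ}
    (hg : InSymm (2 * m) g) (hβ0 : InSymm (2 * m) β)
    (hβ1 : ∀ j, 1 ≤ j → j ≤ m - 1 → β j = 2 * j + 1)
    (hβ4 : ∀ j, m + 2 ≤ j → j ≤ 2 * m → β j = 2 * j - 2 * m - 2) :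
    (∀ j ∈ Icc 1 (2 * m), g (β j) ≤ 2 * j ∧ 2 * j ≤ g (β j) + 2 * m + 1) ↔
      AltExcedance m g := by
  constructor
  · intro h k hk hkm
    have hodd := h k (mem_Icc.2 ⟨hk, by omega⟩)
    have heven := h (k + m + 1) (mem_Icc.2 ⟨by omega, by omega⟩)
    rw [hβ1 k hk (by omega)] at hodd
    rw [hβ4 (k + m + 1) (by omega) (by omega), show 2 * (k + m + 1) - 2 * m - 2 = 2 * k by omega]
      at heven
    omega
  · intro h j hj
    rw [mem_Icc] at hj
    have hβj := hβ0.apply_bounds hj.1 hj.2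
    have hgβj := hg.apply_bounds hβj.1 hβj.2
    constructor
    · rcases lt_or_ge j m with hjm | hjm
      · have := (h j hj.1 hjm).1
        rw [hβ1 j hj.1 (by omega)]
        omega
      · omega
    · rcases le_or_gt j (m + 1) with hjm | hjm
      · omega
      · have := (h (j - m - 1) (by omega) (by omega)).2
        rw [hβ4 j hjm hj.2, show 2 * j - 2 * m - 2 = 2 * (j - m - 1) by omega]
        omega

lemma segment_iff_altExcedance {m : ℕ} {w α β : Perm ℕ} {u : Perm ℕ} (hu : InSymm (2 * m) u)
    (hw1 : ∀ j, 1 ≤ j → j ≤ m → w j = j + m)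
    (hw2 : ∀ j, m + 1 ≤ j → j ≤ 2 * m → w j = j - m)
    (hα0 : InSymm (2 * m) α)
    (hα1 : ∀ j, 1 ≤ j → j ≤ m → α j = 2 * j - 1)
    (hα2 : ∀ j, m + 1 ≤ j → j ≤ 2 * m → α j = 2 * j - 2 * m)
    (hβ0 : InSymm (2 * m) β)
    (hβ1 : ∀ j, 1 ≤ j → j ≤ m - 1 → β j = 2 * j + 1)
    (hβ4 : ∀ j, m + 2 ≤ j → j ≤ 2 * m → β j = 2 * j - 2 * m - 2) :
    permDist (2 * m) 1 u + permDist (2 * m) u w = permDist (2 * m) 1 w ↔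
      AltExcedance m (α * u⁻¹ * β⁻¹) := by
  have hg : InSymm (2 * m) (α * u⁻¹ * β⁻¹) := (hα0.mul hu.inv).mul hβ0.inv
  rw [segment_iff_forall_alpha_le u hw1 hw2 hα1 hα2,
    hu.forall_mem_Icc_iff (P := fun t j => α t ≤ 2 * j ∧ 2 * j ≤ α t + 2 * m + 1),
    ← forall_beta_le_iff_altExcedance hg hβ0 hβ1 hβ4]
  simp

def succCycle (n : ℕ) : Perm ℕ where
  toFun x := if 1 ≤ x ∧ x ≤ n then x + 1 else if x = n + 1 then 1 else x
  invFun y := if 2 ≤ y ∧ y ≤ n + 1 then y - 1 else if y = 1 then n + 1 else y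
  left_inv x := by dsimp only; split_ifs <;> omega
  right_inv y := by dsimp only; split_ifs <;> omega

lemma succCycle_apply_of_le {n x : ℕ} (h1 : 1 ≤ x) (h2 : x ≤ n) : succCycle n x = x + 1 :=
  if_pos ⟨h1, h2⟩

lemma succCycle_apply_add_one (n : ℕ) : succCycle n (n + 1) = 1 := by
  simp [succCycle]

lemma succCycle_apply_of_notMem {n x : ℕ} (h : x = 0 ∨ n + 1 < x) : succCycle n x = x := by
  simp only [succCycle, coe_fn_mk]
  split_ifs <;> omega

/-- Conjugating by `succCycle (2 * m)` turns the one-line notation of `g ∈ S_{2m}` into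
`(1, g(1)+1, …, g(2m)+1, 2m+2)`; the two transpositions then swap the first two and the last
two entries. -/
def eta (m : ℕ) (g : Perm ℕ) : Perm ℕ :=
  succCycle (2 * m) * g * (succCycle (2 * m))⁻¹ * swap 1 2 * swap (2 * m + 1) (2 * m + 2)

def HasEtaValues (m : ℕ) (g π : Perm ℕ) : Prop :=
  InSymm (2 * m + 2) π ∧
    π 1 = g 1 + 1 ∧
    π 2 = 1 ∧
    (∀ i, 3 ≤ i → i ≤ 2 * m → π i = g (i - 1) + 1) ∧
    π (2 * m + 1) = 2 * m + 2 ∧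
    π (2 * m + 2) = g (2 * m) + 1

lemma eta_injective (m : ℕ) : Function.Injective (eta m) := fun g g' h => by
  simpa [eta] using h

lemma eq_eta_of_hasEtaValues {m : ℕ} (hm : 1 ≤ m) {g π : Perm ℕ} (hg : InSymm (2 * m) g)
    (h : HasEtaValues m g π) : π = eta m g := by
  obtain ⟨hπ, h1, h2, hmid, h2m1, h2m2⟩ := h
  suffices π * swap (2 * m + 1) (2 * m + 2) * swap 1 2 * succCycle (2 * m) =
      succCycle (2 * m) * g by
    rw [eta, ← this]
    simp [mul_assoc]
  ext y
  simp only [Perm.mul_apply]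
  rcases (show y = 0 ∨ y = 1 ∨ (2 ≤ y ∧ y < 2 * m) ∨ y = 2 * m ∨ y = 2 * m + 1 ∨ 2 * m + 1 < y by
    omega) with rfl | rfl | hy | rfl | rfl | hy
  · rw [succCycle_apply_of_notMem (.inl rfl), hg 0 (by simp), succCycle_apply_of_notMem (.inl rfl),
      swap_apply_of_ne_of_ne (x := 0) (by omega) (by omega),
      swap_apply_of_ne_of_ne (x := 0) (by omega) (by omega), hπ 0 (by simp)]
  · have hg1 := hg.apply_bounds le_rfl (by omega)
    rw [succCycle_apply_of_le le_rfl (by omega), succCycle_apply_of_le hg1.1 hg1.2,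
      swap_apply_right, swap_apply_of_ne_of_ne (x := 1) (by omega) (by omega), h1]
  · have hgy := hg.apply_bounds (i := y) (by omega) (by omega)
    rw [succCycle_apply_of_le (by omega) (by omega), succCycle_apply_of_le hgy.1 hgy.2,
      swap_apply_of_ne_of_ne (x := y + 1) (by omega) (by omega),
      swap_apply_of_ne_of_ne (x := y + 1) (by omega) (by omega),
      hmid (y + 1) (by omega) (by omega), Nat.add_sub_cancel]
  · have hgm := hg.apply_bounds (i := 2 * m) (by omega) le_rfl
    rw [succCycle_apply_of_le (by omega) le_rfl, succCycle_apply_of_le hgm.1 hgm.2,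
      swap_apply_of_ne_of_ne (x := 2 * m + 1) (by omega) (by omega), swap_apply_left, h2m2]
  · rw [hg (2 * m + 1) (by simp), succCycle_apply_add_one, swap_apply_left,
      swap_apply_of_ne_of_ne (x := 2) (by omega) (by omega), h2]
  · rw [hg y (by simp; omega), succCycle_apply_of_notMem (.inr hy),
      swap_apply_of_ne_of_ne (x := y) (by omega) (by omega)]
    rcases (show y = 2 * m + 2 ∨ 2 * m + 2 < y by omega) with rfl | hy
    · rw [swap_apply_right, h2m1]
    · rw [swap_apply_of_ne_of_ne (x := y) (by omega) (by omega), hπ y (by simp; omega)]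

lemma memC_iff_altExcedance {m : ℕ} (hm : 1 ≤ m) {g π : Perm ℕ} (hg : InSymm (2 * m) g)
    (h : HasEtaValues m g π) :
    (∀ i, 1 ≤ i → i ≤ m + 1 → π (2 * i) < 2 * i ∧ 2 * i ≤ π (2 * i - 1)) ↔
      AltExcedance m g := by
  obtain ⟨-, h1, h2, hmid, h2m1, h2m2⟩ := h
  constructor
  · intro hC k hk hkm
    have hCk := hC (k + 1) (by omega) (by omega)
    have e1 : π (2 * (k + 1)) = g (2 * k + 1) + 1 := hmid _ (by omega) (by omega)
    have e2 : π (2 * (k + 1) - 1) = g (2 * k) + 1 := hmid _ (by omega) (by omega)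
    omega
  · intro hA i hi1 hi2
    rcases (show i = 1 ∨ (2 ≤ i ∧ i ≤ m) ∨ i = m + 1 by omega) with rfl | hi | rfl
    · have hg1 := hg.apply_bounds le_rfl (by omega)
      simp only [Nat.mul_one, Nat.add_one_sub_one, h1, h2]
      omega
    · obtain ⟨k, rfl⟩ : ∃ k, i = k + 1 := ⟨i - 1, by omega⟩
      have e1 : π (2 * (k + 1)) = g (2 * k + 1) + 1 := hmid _ (by omega) (by omega)
      have e2 : π (2 * (k + 1) - 1) = g (2 * k) + 1 := hmid _ (by omega) (by omega)
      have := hA k (by omega) (by omega)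
      omega
    · have hgm := hg.apply_bounds (i := 2 * m) (by omega) le_rfl
      rw [show 2 * (m + 1) = 2 * m + 2 by ring, show 2 * m + 2 - 1 = 2 * m + 1 by omega, h2m2,
        h2m1]
      omega

lemma exists_eta_eq {m : ℕ} (hm : 1 ≤ m) {π : Perm ℕ} (hπ : InSymm (2 * m + 2) π)
    (hC : ∀ i, 1 ≤ i → i ≤ m + 1 → π (2 * i) < 2 * i ∧ 2 * i ≤ π (2 * i - 1)) :
    ∃ g, InSymm (2 * m) g ∧ eta m g = π := by
  have h2 : π 2 = 1 := by
    have : π 2 < 2 := (hC 1 le_rfl (by omega)).1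
    have := hπ.apply_bounds (i := 2) (by omega) (by omega)
    omega
  have h2m1 : π (2 * m + 1) = 2 * m + 2 := by
    have := (hC (m + 1) (by omega) le_rfl).2
    rw [show 2 * (m + 1) - 1 = 2 * m + 1 by omega] at this
    have := hπ.apply_bounds (i := 2 * m + 1) (by omega) (by omega)
    omega
  refine ⟨(succCycle (2 * m))⁻¹ * π * swap (2 * m + 1) (2 * m + 2) * swap 1 2 * succCycle (2 * m),
    fun y hy => ?_, by simp [eta, mul_assoc]⟩
  rw [mem_Icc] at hy
  simp only [Perm.mul_apply, Perm.inv_eq_iff_eq]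
  rcases (show y = 0 ∨ y = 2 * m + 1 ∨ y = 2 * m + 2 ∨ 2 * m + 2 < y by omega)
    with rfl | rfl | rfl | hy
  · rw [succCycle_apply_of_notMem (.inl rfl), swap_apply_of_ne_of_ne (x := 0) (by omega) (by omega),
      swap_apply_of_ne_of_ne (x := 0) (by omega) (by omega), hπ 0 (by simp)]
  · rw [succCycle_apply_add_one, swap_apply_left,
      swap_apply_of_ne_of_ne (x := 2) (by omega) (by omega), h2]
  · rw [succCycle_apply_of_notMem (.inr (by omega)),
      swap_apply_of_ne_of_ne (x := 2 * m + 2) (by omega) (by omega), swap_apply_right, h2m1]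
  · rw [succCycle_apply_of_notMem (.inr (by omega)),
      swap_apply_of_ne_of_ne (x := y) (by omega) (by omega),
      swap_apply_of_ne_of_ne (x := y) (by omega) (by omega), hπ y (by simp; omega)]

theorem h_bijOn_segment_C_general (m : ℕ) (hm : 1 ≤ m) (w α β : Equiv.Perm ℕ)
    -- `w` is `w_{2m}` with one-line notation `(m+1, …, 2m, 1, …, m)`
    (hw1 : ∀ j, 1 ≤ j → j ≤ m → w j = j + m)
    (hw2 : ∀ j, m + 1 ≤ j → j ≤ 2 * m → w j = j - m)
    -- `α` has one-line notation `(1, 3, …, 2m−1, 2, 4, …, 2m)`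
    (hα0 : InSymm (2 * m) α)
    (hα1 : ∀ j, 1 ≤ j → j ≤ m → α j = 2 * j - 1)
    (hα2 : ∀ j, m + 1 ≤ j → j ≤ 2 * m → α j = 2 * j - 2 * m)
    -- `β` has one-line notation `(3, 5, …, 2m−1, 1, 2m, 2, 4, …, 2m−2)`
    (hβ0 : InSymm (2 * m) β)
    (hβ1 : ∀ j, 1 ≤ j → j ≤ m - 1 → β j = 2 * j + 1)
    (hβ4 : ∀ j, m + 2 ≤ j → j ≤ 2 * m → β j = 2 * j - 2 * m - 2)
    (H : Equiv.Perm ℕ → Equiv.Perm ℕ)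
    -- `H u = η(α u⁻¹ β⁻¹)` for every `u ∈ S_{2m}`
    (hH : ∀ u : Equiv.Perm ℕ, InSymm (2 * m) u →
      InSymm (2 * m + 2) (H u) ∧
      H u 1 = (α * u⁻¹ * β⁻¹) 1 + 1 ∧
      H u 2 = 1 ∧
      (∀ i, 3 ≤ i → i ≤ 2 * m → H u i = (α * u⁻¹ * β⁻¹) (i - 1) + 1) ∧
      H u (2 * m + 1) = 2 * m + 2 ∧
      H u (2 * m + 2) = (α * u⁻¹ * β⁻¹) (2 * m) + 1) :
    Set.BijOn H
      {v : Equiv.Perm ℕ | InSymm (2 * m) v ∧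
        permDist (2 * m) 1 v + permDist (2 * m) v w = permDist (2 * m) 1 w}
      {π : Equiv.Perm ℕ | InSymm (2 * m + 2) π ∧
        ∀ i, 1 ≤ i → i ≤ m + 1 → π (2 * i) < 2 * i ∧ 2 * i ≤ π (2 * i - 1)} ∧
    Set.ncard
      {v : Equiv.Perm ℕ | InSymm (2 * m) v ∧
        permDist (2 * m) 1 v + permDist (2 * m) v w = permDist (2 * m) 1 w} =
    Set.ncard
      {π : Equiv.Perm ℕ | InSymm (2 * m + 2) π ∧
        ∀ i, 1 ≤ i → i ≤ m + 1 → π (2 * i) < 2 * i ∧ 2 * i ≤ π (2 * i - 1)} := by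
  have hg (u : Perm ℕ) (hu : InSymm (2 * m) u) : InSymm (2 * m) (α * u⁻¹ * β⁻¹) :=
    (hα0.mul hu.inv).mul hβ0.inv
  have hH_eq (u : Perm ℕ) (hu : InSymm (2 * m) u) : H u = eta m (α * u⁻¹ * β⁻¹) :=
    eq_eta_of_hasEtaValues hm (hg u hu) (hH u hu)
  have hsegment (u : Perm ℕ) (hu : InSymm (2 * m) u) :=
    segment_iff_altExcedance hu hw1 hw2 hα0 hα1 hα2 hβ0 hβ1 hβ4
  have hC (u : Perm ℕ) (hu : InSymm (2 * m) u) := memC_iff_altExcedance hm (hg u hu) (hH u hu)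
  refine ⟨?bij, Set.BijOn.ncard_eq ?bij⟩
  refine ⟨fun u ⟨hu, hd⟩ => ⟨(hH u hu).1, (hC u hu).2 ((hsegment u hu).1 hd)⟩,
    fun u ⟨hu, _⟩ u' ⟨hu', _⟩ huu' => ?_, fun π ⟨hπ, hπC⟩ => ?_⟩
  · rw [hH_eq u hu, hH_eq u' hu'] at huu'
    simpa using eta_injective m huu'
  · obtain ⟨g, hg0, rfl⟩ := exists_eta_eq hm hπ hπC
    have hu : InSymm (2 * m) (β⁻¹ * g⁻¹ * α) := (hβ0.inv.mul hg0.inv).mul hα0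
    have hgu : α * (β⁻¹ * g⁻¹ * α)⁻¹ * β⁻¹ = g := by group
    have hHu : H (β⁻¹ * g⁻¹ * α) = eta m g := by rw [hH_eq _ hu, hgu]
    exact ⟨β⁻¹ * g⁻¹ * α, ⟨hu, (hsegment _ hu).2 ((hC _ hu).1 (hHu ▸ hπC))⟩, hHu⟩

/-- `h : u ↦ η(α u⁻¹ β⁻¹)` restricts to a bijection from the
segment `[id, w_{2m}]` onto `C_{2m+2}`; in particular the two sets have the
same cardinality. -/
theorem h_bijOn_segment_C (m : ℕ) (hm : 1 ≤ m) (w α β : Equiv.Perm ℕ)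
    -- `w` is `w_{2m}` with one-line notation `(m+1, …, 2m, 1, …, m)`
    (hw0 : InSymm (2 * m) w)
    (hw1 : ∀ j, 1 ≤ j → j ≤ m → w j = j + m)
    (hw2 : ∀ j, m + 1 ≤ j → j ≤ 2 * m → w j = j - m)
    -- `α` has one-line notation `(1, 3, …, 2m−1, 2, 4, …, 2m)`
    (hα0 : InSymm (2 * m) α)
    (hα1 : ∀ j, 1 ≤ j → j ≤ m → α j = 2 * j - 1)
    (hα2 : ∀ j, m + 1 ≤ j → j ≤ 2 * m → α j = 2 * j - 2 * m)
    -- `β` has one-line notation `(3, 5, …, 2m−1, 1, 2m, 2, 4, …, 2m−2)`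
    (hβ0 : InSymm (2 * m) β)
    (hβ1 : ∀ j, 1 ≤ j → j ≤ m - 1 → β j = 2 * j + 1)
    (hβ2 : β m = 1)
    (hβ3 : β (m + 1) = 2 * m)
    (hβ4 : ∀ j, m + 2 ≤ j → j ≤ 2 * m → β j = 2 * j - 2 * m - 2)
    (H : Equiv.Perm ℕ → Equiv.Perm ℕ)
    -- `H u = η(α u⁻¹ β⁻¹)` for every `u ∈ S_{2m}`
    (hH : ∀ u : Equiv.Perm ℕ, InSymm (2 * m) u →
      InSymm (2 * m + 2) (H u) ∧
      H u 1 = (α * u⁻¹ * β⁻¹) 1 + 1 ∧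
      H u 2 = 1 ∧
      (∀ i, 3 ≤ i → i ≤ 2 * m → H u i = (α * u⁻¹ * β⁻¹) (i - 1) + 1) ∧
      H u (2 * m + 1) = 2 * m + 2 ∧
      H u (2 * m + 2) = (α * u⁻¹ * β⁻¹) (2 * m) + 1) :
    Set.BijOn H
      {v : Equiv.Perm ℕ | InSymm (2 * m) v ∧
        permDist (2 * m) 1 v + permDist (2 * m) v w = permDist (2 * m) 1 w}
      {π : Equiv.Perm ℕ | InSymm (2 * m + 2) π ∧
        ∀ i, 1 ≤ i → i ≤ m + 1 → π (2 * i) < 2 * i ∧ 2 * i ≤ π (2 * i - 1)} ∧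
    Set.ncard
      {v : Equiv.Perm ℕ | InSymm (2 * m) v ∧
        permDist (2 * m) 1 v + permDist (2 * m) v w = permDist (2 * m) 1 w} =
    Set.ncard
      {π : Equiv.Perm ℕ | InSymm (2 * m + 2) π ∧
        ∀ i, 1 ≤ i → i ≤ m + 1 → π (2 * i) < 2 * i ∧ 2 * i ≤ π (2 * i - 1)} :=
  h_bijOn_segment_C_general m hm w α β hw1 hw2 hα0 hα1 hα2 hβ0 hβ1 hβ4 H hH
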